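/- The map f : C_q × F_{p,q} → N_{pq²} determined on generators by f(α) = a^p, f(β) = a^q, f(γ) = c is a well-defined group isomorphism. In particular, N_{pq²} is isomorphic to the direct product C_q × F_{p,q}. -/

import Mathlib

open Multiplicative

namespace Mizerka

/-- The standing hypotheses: `p` and `q` are odd primes with `q ∣ p - 1`, and `i` is a
natural number with `i ≡ 1 (mod q)` whose multiplicative order modulo `p` equals `q`. -/
structure Hyp (p q i : ℕ) : Prop where
  hp : Nat.Prime p
  hq : Nat.Prime q
  hoddp : Odd p
  hoddq : Odd q
  hdvd : q ∣ p - 1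
  hmod : i ≡ 1 [MOD q]
  hord : orderOf (i : ZMod p) = q

namespace Hyp

variable {p q i : ℕ}

theorem coprime_q (h : Hyp p q i) : Nat.Coprime i q := by
  have h1 : i % q = 1 % q := h.hmod
  unfold Nat.Coprime
  rw [Nat.gcd_comm, Nat.gcd_rec, h1, ← Nat.gcd_rec, Nat.gcd_one_right]

theorem coprime_p (h : Hyp p q i) : Nat.Coprime i p := by
  haveI : NeZero p := ⟨h.hp.ne_zero⟩
  have hq1 : q - 1 + 1 = q := Nat.succ_pred_eq_of_pos h.hq.pos
  have hmul : (i : ZMod p) * (i : ZMod p) ^ (q - 1) = 1 := by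
    rw [← pow_succ', hq1, ← h.hord, pow_orderOf_eq_one]
  exact (ZMod.isUnit_iff_coprime i p).mp ⟨⟨_, _, hmul, by rw [mul_comm]; exact hmul⟩, rfl⟩

theorem coprime (h : Hyp p q i) : Nat.Coprime i (p * q) :=
  Nat.Coprime.mul_right h.coprime_p h.coprime_q

theorem pow_q_modeq (h : Hyp p q i) : i ^ q ≡ 1 [MOD p * q] := by
  have hpq : p ≠ q := by
    have h1 : 0 < p - 1 := by have := h.hp.two_le; omega
    have := Nat.le_of_dvd h1 h.hdvd
    omega
  have hc : Nat.Coprime p q := (Nat.coprime_primes h.hp h.hq).mpr hpq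
  rw [← Nat.modEq_and_modEq_iff_modEq_mul hc]
  constructor
  · haveI : NeZero p := ⟨h.hp.ne_zero⟩
    have hcast : ((i ^ q : ℕ) : ZMod p) = ((1 : ℕ) : ZMod p) := by
      push_cast
      rw [← h.hord, pow_orderOf_eq_one]
    exact (ZMod.natCast_eq_natCast_iff _ _ _).mp hcast
  · calc i ^ q ≡ 1 ^ q [MOD q] := h.hmod.pow q
      _ = 1 := one_pow q

/-- The unit of `ZMod (p*q)` determined by `i`. -/
def unit (h : Hyp p q i) : (ZMod (p * q))ˣ := ZMod.unitOfCoprime i h.coprime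

/-- The unit of `ZMod p` determined by `i`. -/
def unitP (h : Hyp p q i) : (ZMod p)ˣ := ZMod.unitOfCoprime i h.coprime_p

theorem unit_pow (h : Hyp p q i) : h.unit ^ q = 1 := by
  apply Units.ext
  have h2 : ((i ^ q : ℕ) : ZMod (p * q)) = ((1 : ℕ) : ZMod (p * q)) :=
    (ZMod.natCast_eq_natCast_iff _ _ _).mpr h.pow_q_modeq
  push_cast at h2
  simpa [Hyp.unit] using h2

theorem unitP_pow (h : Hyp p q i) : h.unitP ^ q = 1 := by
  apply Units.ext
  have h2 : (i : ZMod p) ^ q = 1 := by rw [← h.hord]; exact pow_orderOf_eq_one _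
  simpa [Hyp.unitP] using h2

end Hyp

/-- Multiplication by a unit, as an automorphism of the (multiplicatively written)
cyclic group `ZMod n`. -/
def zmodMulAut (n : ℕ) : (ZMod n)ˣ →* MulAut (Multiplicative (ZMod n)) where
  toFun u :=
    { toFun := fun x => ofAdd ((u : ZMod n) * x.toAdd)
      invFun := fun x => ofAdd (((u⁻¹ : (ZMod n)ˣ) : ZMod n) * x.toAdd)
      left_inv := fun x => by simp
      right_inv := fun x => by simp
      map_mul' := fun x y => by simp [mul_add, ← ofAdd_add] }
  map_one' := by ext x; simp
  map_mul' u v := by ext x; simp [mul_assoc]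

/-- The function underlying the automorphism of the dihedral group induced by
multiplication by a unit on the rotation part. -/
def dihedralAutFun (n : ℕ) (u : (ZMod n)ˣ) : DihedralGroup n → DihedralGroup n
  | .r j => .r ((u : ZMod n) * j)
  | .sr j => .sr ((u : ZMod n) * j)

/-- Multiplication of indices by a unit, as an automorphism of the dihedral group:
`a ↦ a^u`, `b ↦ b`. -/
def dihedralAut (n : ℕ) : (ZMod n)ˣ →* MulAut (DihedralGroup n) where
  toFun u :=
    { toFun := dihedralAutFun n u
      invFun := dihedralAutFun n u⁻¹
      left_inv := fun x => by cases x <;> simp [dihedralAutFun]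
      right_inv := fun x => by cases x <;> simp [dihedralAutFun]
      map_mul' := fun x y => by cases x <;> cases y <;> simp [dihedralAutFun, mul_add, mul_sub] }
  map_one' := by ext x; cases x <;> simp [dihedralAutFun]
  map_mul' u v := by ext x; cases x <;> simp [dihedralAutFun, mul_assoc]

/-- The homomorphism `ZMod q →* G` (written multiplicatively) sending `1` to a fixed
element `g` with `g ^ q = 1`. -/
def zmodPow {G : Type*} [Group G] (q : ℕ) [NeZero q] (g : G) (hg : g ^ q = 1) :
    Multiplicative (ZMod q) →* G where
  toFun x := g ^ (toAdd x).val
  map_one' := by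
    show g ^ (toAdd (1 : Multiplicative (ZMod q))).val = 1
    rw [toAdd_one, ZMod.val_zero, pow_zero]
  map_mul' x y := by
    have key : ∀ m : ℕ, g ^ (m % q) = g ^ m := fun m => by
      conv_rhs => rw [← Nat.div_add_mod m q]
      rw [pow_add, pow_mul, hg, one_pow, one_mul]
    show g ^ (toAdd (x * y)).val = g ^ (toAdd x).val * g ^ (toAdd y).val
    rw [toAdd_mul, ZMod.val_add, key, pow_add]

namespace Hyp

variable {p q i : ℕ}

/-- The action of `C_q` on `C_{pq}` sending the generator to multiplication by `i`. -/
def phiN (h : Hyp p q i) : Multiplicative (ZMod q) →* MulAut (Multiplicative (ZMod (p * q))) :=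
  haveI : NeZero q := ⟨h.hq.ne_zero⟩
  zmodPow q (zmodMulAut (p * q) h.unit) (by rw [← map_pow, h.unit_pow, map_one])

/-- The action of `C_q` on `D_{2pq}` sending the generator to `τ` (`τ(a) = a^i`, `τ(b) = b`). -/
def phiG (h : Hyp p q i) : Multiplicative (ZMod q) →* MulAut (DihedralGroup (p * q)) :=
  haveI : NeZero q := ⟨h.hq.ne_zero⟩
  zmodPow q (dihedralAut (p * q) h.unit) (by rw [← map_pow, h.unit_pow, map_one])

/-- The action of `C_q` on `C_p` sending the generator to multiplication by `i`. -/
def phiF (h : Hyp p q i) : Multiplicative (ZMod q) →* MulAut (Multiplicative (ZMod p)) :=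
  haveI : NeZero q := ⟨h.hq.ne_zero⟩
  zmodPow q (zmodMulAut p h.unitP) (by rw [← map_pow, h.unitP_pow, map_one])

end Hyp

/-- The group `N_{pq²} = ⟨a, c ∣ a^{pq} = c^q = 1, c a c⁻¹ = a^i⟩ = C_{pq} ⋊ C_q`. -/
abbrev Npq2 {p q i : ℕ} (h : Hyp p q i) : Type :=
  Multiplicative (ZMod (p * q)) ⋊[h.phiN] Multiplicative (ZMod q)

/-- The group `G_{p,q} = D_{2pq} ⋊_φ C_q`. -/
abbrev Gpq {p q i : ℕ} (h : Hyp p q i) : Type :=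
  DihedralGroup (p * q) ⋊[h.phiG] Multiplicative (ZMod q)

/-- The Frobenius group `F_{p,q} = C_p ⋊ C_q` (the nonabelian group of order `pq`). -/
abbrev Fpq {p q i : ℕ} (h : Hyp p q i) : Type :=
  Multiplicative (ZMod p) ⋊[h.phiF] Multiplicative (ZMod q)

variable {p q i : ℕ}

/-- The generator `a` of `N_{pq²}`. -/
def aN (h : Hyp p q i) : Npq2 h := SemidirectProduct.inl (ofAdd 1)

/-- The generator `c` of `N_{pq²}`. -/
def cN (h : Hyp p q i) : Npq2 h := SemidirectProduct.inr (ofAdd 1)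

/-- The generator `a` of `G_{p,q}`. -/
def aG (h : Hyp p q i) : Gpq h := SemidirectProduct.inl (DihedralGroup.r 1)

/-- The generator `b` of `G_{p,q}`. -/
def bG (h : Hyp p q i) : Gpq h := SemidirectProduct.inl (DihedralGroup.sr 0)

/-- The generator `c` of `G_{p,q}`. -/
def cG (h : Hyp p q i) : Gpq h := SemidirectProduct.inr (ofAdd 1)

/-- The real conjugacy class `(g)^± = (g) ∪ (g⁻¹)`. -/
def realClass {G : Type*} [Group G] (g : G) : Set G := {x | IsConj g x ∨ IsConj g⁻¹ x}

/-- `N` is a normal subgroup whose quotient is an `ℓ`-group (the quotient has `ℓ`-power order,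
i.e. `N` has `ℓ`-power index). -/
def OQuot {G : Type*} [Group G] (ℓ : ℕ) (N : Subgroup G) : Prop :=
  N.Normal ∧ ∃ k : ℕ, N.index = ℓ ^ k

/-- `H` is a large subgroup of `G`: it contains `O^ℓ(G)`, the smallest normal subgroup
with `ℓ`-group quotient, for some prime `ℓ`. -/
def IsLarge {G : Type*} [Group G] (H : Subgroup G) : Prop :=
  ∃ ℓ : ℕ, Nat.Prime ℓ ∧
    ∃ N : Subgroup G, OQuot ℓ N ∧ (∀ M : Subgroup G, OQuot ℓ M → N ≤ M) ∧ N ≤ H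

section Reps

variable {k : Type*} [CommSemiring k] {G : Type*} [Group G]

/-- The subspace `V^H` of `H`-fixed vectors of a representation. -/
def fixedPts {V : Type*} [AddCommMonoid V] [Module k V]
    (ρ : Representation k G V) (H : Subgroup G) : Submodule k V where
  carrier := {v | ∀ g ∈ H, ρ g v = v}
  add_mem' := by
    intro a b ha hb g hg
    rw [map_add, ha g hg, hb g hg]
  zero_mem' := by
    intro g hg
    rw [map_zero]
  smul_mem' := by
    intro c v hv g hg
    rw [map_smul, hv g hg]

end Reps

/-- The weak gap condition for a real representation: `dim V^P ≥ 2 dim V^H` for all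
`P < H ≤ G` with `P` of prime power order. -/
def WeakGap {G : Type*} [Group G] {V : Type*} [AddCommGroup V] [Module ℝ V]
    (ρ : Representation ℝ G V) : Prop :=
  ∀ P H : Subgroup G, P < H → (∃ ℓ k : ℕ, Nat.Prime ℓ ∧ Nat.card P = ℓ ^ k) →
    2 * Module.finrank ℝ (fixedPts ρ H) ≤ Module.finrank ℝ (fixedPts ρ P)

/-- Isomorphism of real representations: an equivariant linear equivalence. -/
def RepIso {G : Type*} [Group G] {U V : Type*} [AddCommGroup U] [Module ℝ U]
    [AddCommGroup V] [Module ℝ V]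
    (ρU : Representation ℝ G U) (ρV : Representation ℝ G V) : Prop :=
  ∃ e : U ≃ₗ[ℝ] V, ∀ (g : G) (u : U), e (ρU g u) = ρV g (e u)

/-- Two real representations are `𝒫`-matched if their restrictions to every subgroup of
prime power order are isomorphic. -/
def PMatched {G : Type*} [Group G] {U V : Type*} [AddCommGroup U] [Module ℝ U]
    [AddCommGroup V] [Module ℝ V]
    (ρU : Representation ℝ G U) (ρV : Representation ℝ G V) : Prop :=
  ∀ P : Subgroup G, (∃ ℓ k : ℕ, Nat.Prime ℓ ∧ Nat.card P = ℓ ^ k) →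
    RepIso (ρU.comp P.subtype) (ρV.comp P.subtype)

/-- A bundled finite-dimensional-free real representation of `G`. -/
structure RealRep (G : Type*) [Group G] where
  carrier : Type
  [acg : AddCommGroup carrier]
  [mod : Module ℝ carrier]
  rho : Representation ℝ G carrier

attribute [instance] RealRep.acg RealRep.mod

theorem dihedralAut_pow_r (n : ℕ) (u : (ZMod n)ˣ) (k : ℕ) (m : ZMod n) :
    ((dihedralAut n u) ^ k) (DihedralGroup.r m)
      = DihedralGroup.r (((u ^ k : (ZMod n)ˣ) : ZMod n) * m) := by
  induction k generalizing m with
  | zero => simp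
  | succ k ih =>
    rw [pow_succ, MulAut.mul_apply]
    have h1 : (dihedralAut n u) (DihedralGroup.r m) = DihedralGroup.r ((u : ZMod n) * m) := rfl
    rw [h1, ih, pow_succ, Units.val_mul, mul_assoc]

theorem Hyp.phiG_r (h : Hyp p q i) (z : Multiplicative (ZMod q)) (m : ZMod (p * q)) :
    h.phiG z (DihedralGroup.r m)
      = DihedralGroup.r (((h.unit ^ (toAdd z).val : (ZMod (p * q))ˣ) : ZMod (p * q)) * m) := by
  have h1 : h.phiG z = (dihedralAut (p * q) h.unit) ^ (toAdd z).val := rfl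
  rw [h1, dihedralAut_pow_r]

theorem r_inv (n : ℕ) (m : ZMod n) : (DihedralGroup.r m)⁻¹ = DihedralGroup.r (-m) := rfl

/-- The subgroup `N_{pq²} = {(aˡ, cᵐ)}` of `G_{p,q}`. -/
def NSub (h : Hyp p q i) : Subgroup (Gpq h) where
  carrier := {x | ∃ l : ZMod (p * q), x.left = DihedralGroup.r l}
  one_mem' := ⟨0, rfl⟩
  mul_mem' := by
    rintro x y ⟨lx, hx⟩ ⟨ly, hy⟩
    refine ⟨lx + (h.unit ^ (toAdd x.right).val : (ZMod (p * q))ˣ) * ly, ?_⟩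
    rw [SemidirectProduct.mul_left, hx, hy, h.phiG_r, DihedralGroup.r_mul_r]
  inv_mem' := by
    rintro x ⟨lx, hx⟩
    refine ⟨-((h.unit ^ (toAdd x.right⁻¹).val : (ZMod (p * q))ˣ) * lx), ?_⟩
    rw [SemidirectProduct.inv_left, hx, r_inv, h.phiG_r]
    congr 1
    ring

/-- The subgroup `N_{2pq} = {(bᵉaˡ, 1)} ≅ D_{2pq}` of `G_{p,q}`. -/
def N2pqSub (h : Hyp p q i) : Subgroup (Gpq h) :=
  MonoidHom.ker SemidirectProduct.rightHom

/-- The subgroup `N¹_{pq} = {(aˡ, 1)}` of `G_{p,q}`. -/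
def NpqOneSub (h : Hyp p q i) : Subgroup (Gpq h) where
  carrier := {x | x.right = 1 ∧ ∃ l : ZMod (p * q), x.left = DihedralGroup.r l}
  one_mem' := ⟨rfl, 0, rfl⟩
  mul_mem' := by
    rintro x y ⟨hx1, lx, hx⟩ ⟨hy1, ly, hy⟩
    refine ⟨by rw [SemidirectProduct.mul_right, hx1, hy1, mul_one],
      lx + (h.unit ^ (toAdd x.right).val : (ZMod (p * q))ˣ) * ly, ?_⟩
    rw [SemidirectProduct.mul_left, hx, hy, h.phiG_r, DihedralGroup.r_mul_r]
  inv_mem' := by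
    rintro x ⟨hx1, lx, hx⟩
    refine ⟨by rw [SemidirectProduct.inv_right, hx1, inv_one],
      -((h.unit ^ (toAdd x.right⁻¹).val : (ZMod (p * q))ˣ) * lx), ?_⟩
    rw [SemidirectProduct.inv_left, hx, r_inv, h.phiG_r]
    congr 1
    ring

/-- The subgroup `N²_{pq} = {(a^{qs}, cᵐ)}` of `G_{p,q}`. -/
def NpqTwoSub (h : Hyp p q i) : Subgroup (Gpq h) where
  carrier := {x | ∃ s : ZMod (p * q), x.left = DihedralGroup.r ((q : ZMod (p * q)) * s)}
  one_mem' := ⟨0, by simp [DihedralGroup.one_def, -DihedralGroup.r_zero]⟩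
  mul_mem' := by
    rintro x y ⟨sx, hx⟩ ⟨sy, hy⟩
    refine ⟨sx + (h.unit ^ (toAdd x.right).val : (ZMod (p * q))ˣ) * sy, ?_⟩
    rw [SemidirectProduct.mul_left, hx, hy, h.phiG_r, DihedralGroup.r_mul_r]
    congr 1
    ring
  inv_mem' := by
    rintro x ⟨sx, hx⟩
    refine ⟨-((h.unit ^ (toAdd x.right⁻¹).val : (ZMod (p * q))ˣ) * sx), ?_⟩
    rw [SemidirectProduct.inv_left, hx, r_inv, h.phiG_r]
    congr 1
    ring

/-- The subgroup `N_p = {(a^{qs}, 1)}` of `G_{p,q}`. -/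
def NpSub (h : Hyp p q i) : Subgroup (Gpq h) where
  carrier := {x | x.right = 1 ∧ ∃ s : ZMod (p * q), x.left = DihedralGroup.r ((q : ZMod (p * q)) * s)}
  one_mem' := ⟨rfl, 0, by simp [DihedralGroup.one_def, -DihedralGroup.r_zero]⟩
  mul_mem' := by
    rintro x y ⟨hx1, sx, hx⟩ ⟨hy1, sy, hy⟩
    refine ⟨by rw [SemidirectProduct.mul_right, hx1, hy1, mul_one],
      sx + (h.unit ^ (toAdd x.right).val : (ZMod (p * q))ˣ) * sy, ?_⟩
    rw [SemidirectProduct.mul_left, hx, hy, h.phiG_r, DihedralGroup.r_mul_r]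
    congr 1
    ring
  inv_mem' := by
    rintro x ⟨hx1, sx, hx⟩
    refine ⟨by rw [SemidirectProduct.inv_right, hx1, inv_one],
      -((h.unit ^ (toAdd x.right⁻¹).val : (ZMod (p * q))ˣ) * sx), ?_⟩
    rw [SemidirectProduct.inv_left, hx, r_inv, h.phiG_r]
    congr 1
    ring

/-- The subgroup `N_q = {(a^{ps}, 1)}` of `G_{p,q}`. -/
def NqSub (h : Hyp p q i) : Subgroup (Gpq h) where
  carrier := {x | x.right = 1 ∧ ∃ s : ZMod (p * q), x.left = DihedralGroup.r ((p : ZMod (p * q)) * s)}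
  one_mem' := ⟨rfl, 0, by simp [DihedralGroup.one_def, -DihedralGroup.r_zero]⟩
  mul_mem' := by
    rintro x y ⟨hx1, sx, hx⟩ ⟨hy1, sy, hy⟩
    refine ⟨by rw [SemidirectProduct.mul_right, hx1, hy1, mul_one],
      sx + (h.unit ^ (toAdd x.right).val : (ZMod (p * q))ˣ) * sy, ?_⟩
    rw [SemidirectProduct.mul_left, hx, hy, h.phiG_r, DihedralGroup.r_mul_r]
    congr 1
    ring
  inv_mem' := by
    rintro x ⟨hx1, sx, hx⟩
    refine ⟨by rw [SemidirectProduct.inv_right, hx1, inv_one],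
      -((h.unit ^ (toAdd x.right⁻¹).val : (ZMod (p * q))ˣ) * sx), ?_⟩
    rw [SemidirectProduct.inv_left, hx, r_inv, h.phiG_r]
    congr 1
    ring

end Mizerka

/-!
Since `q ∣ i - 1`, conjugation by `c` fixes `a^p`. By the Chinese remainder theorem
`(x, y) ↦ q x + p y` identifies `C_p × C_q` with `C_{pq} = ⟨a⟩`, sending the factors to
`⟨a^q⟩` and `⟨a^p⟩`; `c` acts on the first by `x ↦ i x` and trivially on the second. A
semidirect product `(B × C) ⋊ H` in which `H` acts only on `B` is `C × (B ⋊ H)`.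
-/

namespace SemidirectProduct

variable {A B C H : Type*} [Group A] [Group B] [Group C] [Group H]
  {φ : H →* MulAut A} {ψ : H →* MulAut B}

@[simps apply]
def prodEquivOfEquivariant (e : B × C ≃* A) (he : ∀ h b c, φ h (e (b, c)) = e (ψ h b, c)) :
    C × (B ⋊[ψ] H) ≃* A ⋊[φ] H where
  toFun x := ⟨e (x.2.left, x.1), x.2.right⟩
  invFun y := ((e.symm y.left).2, ⟨(e.symm y.left).1, y.right⟩)
  left_inv x := by simp
  right_inv y := by simp
  map_mul' x y := by
    ext
    · simp only [Prod.fst_mul, Prod.snd_mul, mul_left, he, ← map_mul, Prod.mk_mul_mk]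
    · simp

end SemidirectProduct

namespace ZMod

def mulLeftHom {n N : ℕ} (k : ZMod N) (hk : (n : ZMod N) * k = 0) : ZMod n →+ ZMod N :=
  lift n ⟨(AddMonoidHom.mulLeft k).comp (Int.castAddHom (ZMod N)), by simpa [mul_comm] using hk⟩

theorem mulLeftHom_intCast {n N : ℕ} (k : ZMod N) (hk : (n : ZMod N) * k = 0) (a : ℤ) :
    mulLeftHom k hk a = k * a :=
  lift_coe _ _ a

variable (p q : ℕ)

def crtAddHom : ZMod p × ZMod q →+ ZMod (p * q) :=
  (mulLeftHom (q : ZMod (p * q)) (by rw [← Nat.cast_mul, natCast_self])).coprod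
    (mulLeftHom (p : ZMod (p * q)) (by rw [← Nat.cast_mul, mul_comm, natCast_self]))

theorem crtAddHom_intCast (a b : ℤ) : crtAddHom p q (a, b) = q * a + p * b := by
  simp [crtAddHom, mulLeftHom_intCast]

variable {p q}

theorem crtAddHom_injective (hpq : p.Coprime q) : Function.Injective (crtAddHom p q) := by
  rw [injective_iff_map_eq_zero]
  rintro ⟨x, y⟩ hxy
  obtain ⟨a, rfl⟩ := intCast_surjective x
  obtain ⟨b, rfl⟩ := intCast_surjective y
  have hdvd : ((p * q : ℕ) : ℤ) ∣ q * a + p * b := by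
    rw [← intCast_zmod_eq_zero_iff_dvd]
    push_cast
    rwa [crtAddHom_intCast] at hxy
  push_cast at hdvd
  have hcop : IsCoprime (p : ℤ) q := Nat.isCoprime_iff_coprime.mpr hpq
  have hpa : (p : ℤ) ∣ a := hcop.dvd_of_dvd_mul_left <|
    (dvd_add_left (dvd_mul_right _ b)).mp (dvd_trans (dvd_mul_right _ _) hdvd)
  have hqb : (q : ℤ) ∣ b := hcop.symm.dvd_of_dvd_mul_left <|
    (dvd_add_right (dvd_mul_right _ a)).mp (dvd_trans (dvd_mul_left _ _) hdvd)
  simp [Prod.ext_iff, intCast_zmod_eq_zero_iff_dvd, hpa, hqb]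

theorem crtAddHom_surjective (hpq : p.Coprime q) : Function.Surjective (crtAddHom p q) := by
  obtain ⟨s, t, hst⟩ : IsCoprime (q : ℤ) p := Nat.isCoprime_iff_coprime.mpr hpq.symm
  intro z
  obtain ⟨n, rfl⟩ := intCast_surjective z
  refine ⟨((n * s : ℤ), (n * t : ℤ)), ?_⟩
  have hst' : (s : ZMod (p * q)) * q + t * p = 1 := by
    exact_mod_cast congrArg (Int.cast : ℤ → ZMod (p * q)) hst
  rw [crtAddHom_intCast]
  push_cast
  linear_combination (n : ZMod (p * q)) * hst'

noncomputable def crtAddEquiv (hpq : p.Coprime q) : ZMod p × ZMod q ≃+ ZMod (p * q) :=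
  AddEquiv.ofBijective (crtAddHom p q) ⟨crtAddHom_injective hpq, crtAddHom_surjective hpq⟩

theorem natCast_mul_crtAddHom {u : ℕ} (hu : u ≡ 1 [MOD q]) (x : ZMod p) (y : ZMod q) :
    (u : ZMod (p * q)) * crtAddHom p q (x, y) = crtAddHom p q (u * x, y) := by
  obtain ⟨a, rfl⟩ := intCast_surjective x
  obtain ⟨b, rfl⟩ := intCast_surjective y
  have hup : ((u * p : ℕ) : ZMod (p * q)) = ((1 * p : ℕ) : ZMod (p * q)) :=
    (natCast_eq_natCast_iff _ _ _).mpr (mul_comm q p ▸ hu.mul_right' p)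
  have hua : (u : ZMod p) * a = ((u * a : ℤ) : ZMod p) := by push_cast; rfl
  rw [hua, crtAddHom_intCast, crtAddHom_intCast]
  push_cast at hup ⊢
  linear_combination (b : ZMod (p * q)) * hup

end ZMod

namespace Mizerka

variable {p q i : ℕ}

theorem Hyp.coprime_p_q (h : Hyp p q i) : p.Coprime q := by
  refine (Nat.coprime_primes h.hp h.hq).mpr fun hpq => ?_
  have := Nat.le_of_dvd (Nat.sub_pos_of_lt h.hp.one_lt) h.hdvd
  have := h.hp.pos
  omega

theorem zmodMulAut_pow_apply (n : ℕ) (u : (ZMod n)ˣ) (k : ℕ) (m : ZMod n) :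
    (zmodMulAut n u ^ k) (ofAdd m) = ofAdd ((u : ZMod n) ^ k * m) := by
  rw [← map_pow, ← Units.val_pow_eq_pow_val]
  rfl

theorem Hyp.phiN_apply (h : Hyp p q i) (z : Multiplicative (ZMod q)) (m : ZMod (p * q)) :
    h.phiN z (ofAdd m) = ofAdd ((i : ZMod (p * q)) ^ (toAdd z).val * m) :=
  zmodMulAut_pow_apply _ _ _ _

theorem Hyp.phiF_apply (h : Hyp p q i) (z : Multiplicative (ZMod q)) (m : ZMod p) :
    h.phiF z (ofAdd m) = ofAdd ((i : ZMod p) ^ (toAdd z).val * m) :=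
  zmodMulAut_pow_apply _ _ _ _

noncomputable def Hyp.crtMulEquiv (h : Hyp p q i) :
    Multiplicative (ZMod p) × Multiplicative (ZMod q) ≃* Multiplicative (ZMod (p * q)) :=
  (MulEquiv.prodMultiplicative _ _).symm.trans
    (AddEquiv.toMultiplicative (ZMod.crtAddEquiv h.coprime_p_q))

theorem Hyp.crtMulEquiv_apply (h : Hyp p q i) (b : Multiplicative (ZMod p))
    (c : Multiplicative (ZMod q)) :
    h.crtMulEquiv (b, c) = ofAdd (ZMod.crtAddHom p q (toAdd b, toAdd c)) :=
  rfl

theorem Hyp.phiN_crtMulEquiv (h : Hyp p q i) (z : Multiplicative (ZMod q))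
    (b : Multiplicative (ZMod p)) (c : Multiplicative (ZMod q)) :
    h.phiN z (h.crtMulEquiv (b, c)) = h.crtMulEquiv (h.phiF z b, c) := by
  have hmod : i ^ (toAdd z).val ≡ 1 [MOD q] := by simpa using h.hmod.pow (toAdd z).val
  rw [← ofAdd_toAdd b, h.phiF_apply, h.crtMulEquiv_apply, h.crtMulEquiv_apply, h.phiN_apply]
  exact_mod_cast congrArg ofAdd (ZMod.natCast_mul_crtAddHom hmod (toAdd b) (toAdd c))

theorem aN_pow (h : Hyp p q i) (k : ℕ) :
    aN h ^ k = SemidirectProduct.inl (ofAdd (k : ZMod (p * q))) := by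
  rw [aN, ← map_pow, ← ofAdd_nsmul, nsmul_one]

end Mizerka

open Mizerka Multiplicative in
/-- The map `f : C_q × F_{p,q} → N_{pq²}` determined on generators by
`f(α) = a^p`, `f(β) = a^q`, `f(γ) = c` is a well-defined group isomorphism.
In particular, `N_{pq²}` is isomorphic to the direct product `C_q × F_{p,q}`. -/
theorem statement_0 {p q i : ℕ} (h : Hyp p q i) :
    ∃ f : (Multiplicative (ZMod q) × Fpq h) ≃* Npq2 h,
      f (ofAdd 1, 1) = (aN h) ^ p ∧
      f (1, SemidirectProduct.inl (ofAdd 1)) = (aN h) ^ q ∧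
      f (1, SemidirectProduct.inr (ofAdd 1)) = cN h := by
  refine ⟨SemidirectProduct.prodEquivOfEquivariant h.crtMulEquiv h.phiN_crtMulEquiv, ?_, ?_, ?_⟩
  · rw [aN_pow]
    ext
    · simpa [h.crtMulEquiv_apply] using ZMod.crtAddHom_intCast p q 0 1
    · rfl
  · rw [aN_pow]
    ext
    · simpa [h.crtMulEquiv_apply] using ZMod.crtAddHom_intCast p q 1 0
    · rfl
  · exact SemidirectProduct.ext (map_one h.crtMulEquiv) rfl
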